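/- The operators T_i := −U_i arising from an S_n EL-labeling of a finite graded poset P of rank n with 0̂ and 1̂ satisfy the defining relations of the 0-Hecke algebra H_n(0) of type A_{n−1}: T_i² = −T_i, T_i T_j = T_j T_i for |i−j| ≥ 2, and T_i T_{i+1} T_i = T_{i+1} T_i T_{i+1}; hence the linear extension to the free vector space on maximal chains of P gives a representation of H_n(0). -/

import Mathlib

/-! Common definitions: graded posets, saturated/maximal chains, EL-labelings,
inversions and weak order on permutations, descent operators, flag vectors. -/

section Perm

/-- The inversion set `INV(v) = {(v j, v i) : i < j, v i > v j}` of a permutation of `Fin n`. -/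
def invSet {n : ℕ} (v : Equiv.Perm (Fin n)) : Set (Fin n × Fin n) :=
  {p | ∃ i j : Fin n, i < j ∧ v j = p.1 ∧ v i = p.2 ∧ v j < v i}

/-- The number of inversions of a permutation. -/
noncomputable def invCount {n : ℕ} (v : Equiv.Perm (Fin n)) : ℕ :=
  (invSet v).ncard

/-- The adjacent transposition swapping `i` and `i+1` (0-indexed) in `Fin n`
(junk value `1` if out of range). -/
def adjSwap (n : ℕ) (i : ℕ) : Equiv.Perm (Fin n) :=
  if h : i + 1 < n then Equiv.swap ⟨i, Nat.lt_of_succ_lt h⟩ ⟨i + 1, h⟩ else 1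

/-- One step of the right weak order: `v` is obtained from `w` by multiplying on the
right by an adjacent transposition which removes exactly one inversion. -/
def weakStep {n : ℕ} (w v : Equiv.Perm (Fin n)) : Prop :=
  ∃ i : ℕ, i + 1 < n ∧ v = w * adjSwap n i ∧ invCount v + 1 = invCount w

/-- Right weak order: `v ≤_R w` iff `v` is obtained from `w` by a sequence of
inversion-removing right multiplications by adjacent transpositions. -/
def leRW {n : ℕ} (v w : Equiv.Perm (Fin n)) : Prop :=
  Relation.ReflTransGen weakStep w v

end Perm

section Posets

variable {P : Type*}

/-- `c` (an `ℕ`-indexed sequence, constant equal to `y` from index `k` on) is a saturated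
chain `x = c 0 ⋖ c 1 ⋖ ⋯ ⋖ c k = y` of length `k` from `x` to `y`. -/
def IsSatChain [PartialOrder P] (k : ℕ) (c : ℕ → P) (x y : P) : Prop :=
  c 0 = x ∧ (∀ j, k ≤ j → c j = y) ∧ ∀ j, j < k → c j ⋖ c (j + 1)

/-- The chain `c` of length `k` has (weakly) increasing labels. -/
def IncreasingChain [PartialOrder P] (lab : P → P → ℤ) (k : ℕ) (c : ℕ → P) : Prop :=
  ∀ j, j + 1 < k → lab (c j) (c (j + 1)) ≤ lab (c (j + 1)) (c (j + 2))

/-- The label word of length-`k` chain `c` lexicographically strictly precedes that of `d`. -/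
def LexLt [PartialOrder P] (lab : P → P → ℤ) (k : ℕ) (c d : ℕ → P) : Prop :=
  ∃ i < k, (∀ j, j < i → lab (c j) (c (j + 1)) = lab (d j) (d (j + 1))) ∧
    lab (c i) (c (i + 1)) < lab (d i) (d (i + 1))

/-- `lab` is an EL-labeling: in every interval `[x,y]` (containing a saturated chain of
length `k`), there is a unique maximal chain with increasing labels, and it is
lexicographically strictly smaller than every other maximal chain of the interval. -/
def IsELLabeling [PartialOrder P] (lab : P → P → ℤ) : Prop :=
  ∀ x y : P, x < y → ∀ k : ℕ, (∃ c, IsSatChain k c x y) →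
    (∃! c, IsSatChain k c x y ∧ IncreasingChain lab k c) ∧
    ∀ c d, IsSatChain k c x y → IncreasingChain lab k c → IsSatChain k d x y → c ≠ d →
      LexLt lab k c d

/-- `rk` is a rank function making `P` a graded poset of rank `n`, with `rk ⊥ = 0`,
`rk ⊤ = n`, and ranks increasing by one along covers. -/
def IsGraded [PartialOrder P] [BoundedOrder P] (n : ℕ) (rk : P → ℕ) : Prop :=
  rk (⊥ : P) = 0 ∧ rk (⊤ : P) = n ∧ ∀ x y : P, x ⋖ y → rk y = rk x + 1

/-- `lab` is an `S_n` EL-labeling: an EL-labeling such that the label word of every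
maximal chain of `P` is a permutation of `{1, …, n}`. -/
def IsSnELLabeling [PartialOrder P] [BoundedOrder P] (n : ℕ) (lab : P → P → ℤ) : Prop :=
  IsELLabeling lab ∧
    ∀ c : ℕ → P, IsSatChain n c ⊥ ⊤ →
      ∃ σ : Equiv.Perm (Fin n), ∀ j : Fin n, lab (c j) (c ((j : ℕ) + 1)) = ((σ j : ℕ) : ℤ) + 1

/-- The maximal chains of a graded bounded poset of rank `n`. -/
abbrev MaxChain (n : ℕ) (P : Type*) [PartialOrder P] [BoundedOrder P] :=
  {c : ℕ → P // IsSatChain n c ⊥ ⊤}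

/-- The label word of `c` has a descent at position `i` (meaningful for `1 ≤ i ≤ n-1`):
the label of the `i`-th edge exceeds the label of the `(i+1)`-st edge. -/
def DescentAt [PartialOrder P] (lab : P → P → ℤ) (c : ℕ → P) (i : ℕ) : Prop :=
  lab (c i) (c (i + 1)) < lab (c (i - 1)) (c i)

/-- The maximal chain `c` has label word (the permutation) `σ`, where the label of the
`j`-th edge is `σ(j)` (written 1-indexed: the value `(σ j) + 1`). -/
def HasWord [PartialOrder P] (lab : P → P → ℤ) {n : ℕ} (c : ℕ → P)
    (σ : Equiv.Perm (Fin n)) : Prop :=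
  ∀ j : Fin n, lab (c j) (c ((j : ℕ) + 1)) = ((σ j : ℕ) : ℤ) + 1

/-- The defining property of the descent-removing operators `U_i` attached to an
`S_n` EL-labeling: `U i m` agrees with `m` away from rank `i` and has no descent at `i`. -/
def IsUSystem [PartialOrder P] [BoundedOrder P] (n : ℕ) (lab : P → P → ℤ)
    (U : ℕ → MaxChain n P → MaxChain n P) : Prop :=
  ∀ i, 1 ≤ i → i < n → ∀ m : MaxChain n P,
    (∀ j, j ≠ i → (U i m).1 j = m.1 j) ∧ ¬ DescentAt lab (U i m).1 i

/-- `m'` lies in the closure of the maximal chain `m` under the operators `U_i`. -/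
def InClosure [PartialOrder P] [BoundedOrder P] (n : ℕ)
    (U : ℕ → MaxChain n P → MaxChain n P) (m m' : MaxChain n P) : Prop :=
  ∃ l : List ℕ, (∀ i ∈ l, 1 ≤ i ∧ i < n) ∧ List.foldr U m l = m'

/-- `α_P(S)`: the number of chains of `P` whose rank set is exactly `S`. -/
noncomputable def alphaP [PartialOrder P] (rk : P → ℕ) (S : Finset ℕ) : ℕ :=
  Nat.card {t : Finset P // IsChain (· ≤ ·) (t : Set P) ∧ t.image rk = S ∧ t.card = S.card}

/-- The flag `h`-vector `β_P(S) = ∑_{T ⊆ S} (-1)^{|S - T|} α_P(T)`. -/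
noncomputable def betaP [PartialOrder P] (rk : P → ℕ) (S : Finset ℕ) : ℤ :=
  ∑ T ∈ S.powerset, (-1 : ℤ) ^ (S.card - T.card) * (alphaP rk T : ℤ)

/-- `P` is bowtie-free: there are no distinct `a, b, c, d` with `a` and `b` each
covering both `c` and `d`. -/
def BowtieFree (P : Type*) [PartialOrder P] : Prop :=
  ∀ a b c d : P, c ⋖ a → d ⋖ a → c ⋖ b → d ⋖ b → a = b ∨ c = d

/-- The operators `U_i`, `1 ≤ i ≤ n-1`, form a local 0-Hecke action on the maximal
chains: they are local at rank `i`, idempotent, commute at distance `≥ 2`, and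
satisfy the braid relations. -/
def IsLocalHeckeAction [PartialOrder P] [BoundedOrder P] (n : ℕ)
    (U : ℕ → MaxChain n P → MaxChain n P) : Prop :=
  (∀ i, 1 ≤ i → i < n → ∀ m : MaxChain n P, ∀ j, j ≠ i → (U i m).1 j = m.1 j) ∧
  (∀ i, 1 ≤ i → i < n → ∀ m, U i (U i m) = U i m) ∧
  (∀ i j, 1 ≤ i → i < n → 1 ≤ j → j < n → i + 2 ≤ j → ∀ m, U i (U j m) = U j (U i m)) ∧
  (∀ i, 1 ≤ i → i + 1 < n → ∀ m,
    U i (U (i + 1) (U i m)) = U (i + 1) (U i (U (i + 1) m)))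

/-- A good `H_n(0)` action: a local 0-Hecke action on the maximal chains such that for
every `S ⊆ [n-1]`, `α_P(S)` equals the number of maximal chains whose descent set
`{i : U_i m ≠ m}` is contained in `S` (equivalently, `ω F_P = ch χ_P`). -/
def IsGoodHeckeAction [PartialOrder P] [BoundedOrder P] (n : ℕ) (rk : P → ℕ)
    (U : ℕ → MaxChain n P → MaxChain n P) : Prop :=
  IsLocalHeckeAction n U ∧
    ∀ S : Finset ℕ, S ⊆ Finset.Icc 1 (n - 1) →
      alphaP rk S =
        Nat.card {m : MaxChain n P // ∀ i, 1 ≤ i → i < n → U i m ≠ m → i ∈ S}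

/-- An expression `U_{i_1} ⋯ U_{i_r} (m) = m'` (the list `l = [i_1, …, i_r]`, applied
right-to-left) is restless: every single application strictly changes the chain. -/
def Restless [PartialOrder P] [BoundedOrder P] {n : ℕ}
    (U : ℕ → MaxChain n P → MaxChain n P) (l : List ℕ) (m m' : MaxChain n P) : Prop :=
  List.foldr U m l = m' ∧
    ∀ i t, (i :: t) <:+ l → U i (List.foldr U m t) ≠ List.foldr U m t

/-- A subset of a lattice closed under join and meet. -/
def SublClosed [Lattice P] (t : Set P) : Prop :=
  ∀ a ∈ t, ∀ b ∈ t, a ⊔ b ∈ t ∧ a ⊓ b ∈ t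

/-- The sublattice generated by the set `s`. -/
def genSub [Lattice P] (s : Set P) : Set P :=
  ⋂₀ {t : Set P | s ⊆ t ∧ SublClosed t}

/-- The subset `t` is distributive (as a sublattice). -/
def DistribOn [Lattice P] (t : Set P) : Prop :=
  ∀ a ∈ t, ∀ b ∈ t, ∀ c ∈ t, a ⊓ (b ⊔ c) = (a ⊓ b) ⊔ (a ⊓ c)

/-- A lattice (graded, of rank `n`) is supersolvable if it has a maximal chain (an
M-chain) which together with any other chain generates a distributive sublattice. -/
def Supersolvable (n : ℕ) (P : Type*) [Lattice P] [BoundedOrder P] : Prop :=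
  ∃ M : MaxChain n P, ∀ c : Set P, IsChain (· ≤ ·) c →
    DistribOn (genSub (Set.range M.1 ∪ c))

end Posets

/-! `U_i` replaces the rank-`i` element of a maximal chain `m` by the middle element of the
unique increasing chain of the rank-two interval `[m (i-1), m (i+1)]`. Since every label word
is a permutation, this sorts the two labels of the edges below and above rank `i`. Each relation
then compares two maximal chains which agree outside a window of ranks and have no descent
inside it (for the braid relation, both sides sort the three labels around ranks `i`, `i+1`);
by uniqueness of increasing chains in an EL-labeling they coincide. The relations for
`T_i = -U_i` follow by functoriality of `Finsupp.lmapDomain`. -/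

theorem Equiv.Perm.apply_eq_or_apply_eq_of_eqOn_compl {α : Type*} {σ τ : Equiv.Perm α}
    {a b : α} (h : ∀ x, x ≠ a → x ≠ b → σ x = τ x) {y : α} (hy : y = a ∨ y = b) :
    σ y = τ a ∨ σ y = τ b := by
  by_contra! hne
  have hx : τ (τ.symm (σ y)) = σ y := τ.apply_symm_apply _
  have hxa : τ.symm (σ y) ≠ a := fun e => hne.1 (by rw [← hx, e])
  have hxb : τ.symm (σ y) ≠ b := fun e => hne.2 (by rw [← hx, e])
  have hxy : τ.symm (σ y) = y := σ.injective ((h _ hxa hxb).trans hx)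
  rcases hy with rfl | rfl
  exacts [hxa hxy, hxb hxy]

section Chains

variable {P : Type*} [PartialOrder P]

theorem IsSatChain.lt {k : ℕ} {c : ℕ → P} {x y : P} (hc : IsSatChain k c x y) (hk : 0 < k) :
    x < y := by
  obtain ⟨hx, hy, hcov⟩ := hc
  have hlt : ∀ j, j < k → x < c (j + 1) := by
    intro j
    induction j with
    | zero => intro h; exact hx ▸ (hcov 0 h).lt
    | succ j ih => intro h; exact (ih (by omega)).trans (hcov _ h).lt
  simpa [Nat.sub_add_cancel hk, hy k le_rfl] using hlt (k - 1) (by omega)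

theorem IsSatChain.window {N a k : ℕ} {c : ℕ → P} {x y : P} (hc : IsSatChain N c x y)
    (hak : a + k ≤ N) : IsSatChain k (fun j => c (a + min j k)) (c a) (c (a + k)) := by
  refine ⟨by simp, fun j hj => by simp [min_eq_right hj], fun j hj => ?_⟩
  simp only [min_eq_left hj.le, min_eq_left (Nat.succ_le_of_lt hj)]
  exact hc.2.2 (a + j) (by omega)

theorem increasingChain_window {lab : P → P → ℤ} {c : ℕ → P} {a k : ℕ}
    (hc : ∀ j, a < j → j < a + k → ¬ DescentAt lab c j) :
    IncreasingChain lab k (fun j => c (a + min j k)) := by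
  intro j hj
  have h := not_lt.mp (hc (a + j + 1) (by omega) (by omega))
  simpa [DescentAt, min_eq_left (by omega : j ≤ k), min_eq_left (by omega : j + 1 ≤ k),
    min_eq_left (by omega : j + 2 ≤ k), Nat.add_assoc] using h

def edgeLab (lab : P → P → ℤ) (c : ℕ → P) (j : ℕ) : ℤ :=
  lab (c j) (c (j + 1))

theorem descentAt_iff {lab : P → P → ℤ} {c : ℕ → P} {i : ℕ} (hi : 1 ≤ i) :
    DescentAt lab c i ↔ edgeLab lab c i < edgeLab lab c (i - 1) := by
  rw [DescentAt, edgeLab, edgeLab, Nat.sub_add_cancel hi]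

theorem descentAt_congr {lab : P → P → ℤ} {c d : ℕ → P} {i : ℕ} (hpred : c (i - 1) = d (i - 1))
    (hi : c i = d i) (hsucc : c (i + 1) = d (i + 1)) :
    DescentAt lab c i ↔ DescentAt lab d i := by
  simp only [DescentAt, hpred, hi, hsucc]

theorem IsELLabeling.eq_of_forall_not_descentAt {lab : P → P → ℤ} (hEL : IsELLabeling lab)
    {N a k : ℕ} {c d : ℕ → P} {x y x' y' : P} (hc : IsSatChain N c x y)
    (hd : IsSatChain N d x' y') (hak : a + k ≤ N) (hlo : c a = d a) (hhi : c (a + k) = d (a + k))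
    (hcd : ∀ j, a < j → j < a + k → ¬ DescentAt lab c j)
    (hdd : ∀ j, a < j → j < a + k → ¬ DescentAt lab d j)
    {j : ℕ} (hj : a ≤ j) (hj' : j ≤ a + k) : c j = d j := by
  rcases Nat.eq_zero_or_pos k with rfl | hk
  · obtain rfl : j = a := by omega
    exact hlo
  have hsat_c := hc.window hak
  have hsat_d := hd.window hak
  rw [← hlo, ← hhi] at hsat_d
  have hwin := ((hEL _ _ (hsat_c.lt hk) k ⟨_, hsat_c⟩).1).unique
    ⟨hsat_c, increasingChain_window hcd⟩ ⟨hsat_d, increasingChain_window hdd⟩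
  simpa [min_eq_left (by omega : j - a ≤ k), Nat.add_sub_cancel' hj] using congrFun hwin (j - a)

variable [BoundedOrder P] {n : ℕ} {lab : P → P → ℤ}

theorem IsELLabeling.maxChain_ext (hEL : IsELLabeling lab) {c d : MaxChain n P} {a k : ℕ}
    (hak : a + k ≤ n) (hout : ∀ j, j ≤ a ∨ a + k ≤ j → c.1 j = d.1 j)
    (hcd : ∀ j, a < j → j < a + k → ¬ DescentAt lab c.1 j)
    (hdd : ∀ j, a < j → j < a + k → ¬ DescentAt lab d.1 j) : c = d := by
  refine Subtype.ext (funext fun j => ?_)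
  by_cases hj : j ≤ a ∨ a + k ≤ j
  · exact hout j hj
  · exact hEL.eq_of_forall_not_descentAt c.2 d.2 hak (hout a (.inl le_rfl))
      (hout _ (.inr le_rfl)) hcd hdd (by omega) (by omega)

end Chains

section USystem

variable {P : Type*} [PartialOrder P] [BoundedOrder P] {n : ℕ} {lab : P → P → ℤ}
  {U : ℕ → MaxChain n P → MaxChain n P} {i : ℕ}

namespace IsUSystem

section Local

variable (hU : IsUSystem n lab U) (h1 : 1 ≤ i) (h2 : i < n)
include hU h1 h2

theorem apply_of_ne (m : MaxChain n P) {j : ℕ} (hj : j ≠ i) : (U i m).1 j = m.1 j :=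
  (hU i h1 h2 m).1 j hj

theorem not_descentAt (m : MaxChain n P) : ¬ DescentAt lab (U i m).1 i :=
  (hU i h1 h2 m).2

theorem edgeLab_of_ne (m : MaxChain n P) {j : ℕ} (hj : j ≠ i) (hj' : j + 1 ≠ i) :
    edgeLab lab (U i m).1 j = edgeLab lab m.1 j := by
  rw [edgeLab, edgeLab, hU.apply_of_ne h1 h2 m hj, hU.apply_of_ne h1 h2 m hj']

theorem edgeLab_sort
    (hword : ∀ c : ℕ → P, IsSatChain n c ⊥ ⊤ → ∃ σ : Equiv.Perm (Fin n), HasWord lab c σ)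
    (m : MaxChain n P) :
    edgeLab lab (U i m).1 (i - 1) = min (edgeLab lab m.1 (i - 1)) (edgeLab lab m.1 i) ∧
      edgeLab lab (U i m).1 i = max (edgeLab lab m.1 (i - 1)) (edgeLab lab m.1 i) := by
  obtain ⟨σ, hσ⟩ := hword m.1 m.2
  obtain ⟨τ, hτ⟩ := hword (U i m).1 (U i m).2
  let a : Fin n := ⟨i - 1, by omega⟩
  let b : Fin n := ⟨i, h2⟩
  have hab : a ≠ b := by simp only [a, b, ne_eq, Fin.mk.injEq]; omega
  have hagree : ∀ x, x ≠ a → x ≠ b → τ x = σ x := by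
    intro x hxa hxb
    have hx : (x : ℕ) ≠ i := fun h => hxb (Fin.ext h)
    have hx' : (x : ℕ) + 1 ≠ i := fun h => hxa (Fin.ext (by simp only [a]; omega))
    have h := (hτ x).symm.trans ((hU.edgeLab_of_ne h1 h2 m hx hx').trans (hσ x))
    exact Fin.ext (by omega)
  -- the words `τ` of `U i m` and `σ` of `m` differ at most by a swap of the edges `a`, `b`
  have hτa := Equiv.Perm.apply_eq_or_apply_eq_of_eqOn_compl hagree (.inl rfl)
  have hτb := Equiv.Perm.apply_eq_or_apply_eq_of_eqOn_compl hagree (.inr rfl)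
  have hσab := σ.injective.ne hab
  have hτab := τ.injective.ne hab
  have hsorted := (descentAt_iff h1).not.mp (hU.not_descentAt h1 h2 m)
  have eτa : edgeLab lab (U i m).1 (i - 1) = (τ a : ℕ) + 1 := hτ a
  have eτb : edgeLab lab (U i m).1 i = (τ b : ℕ) + 1 := hτ b
  have eσa : edgeLab lab m.1 (i - 1) = (σ a : ℕ) + 1 := hσ a
  have eσb : edgeLab lab m.1 i = (σ b : ℕ) + 1 := hσ b
  rw [eτa, eτb] at hsorted ⊢
  rw [eσa, eσb]
  simp only [Fin.ext_iff, ne_eq] at hτa hτb hσab hτab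
  omega

end Local

variable (hEL : IsELLabeling lab) (hU : IsUSystem n lab U)
include hEL hU

theorem apply_apply_self (h1 : 1 ≤ i) (h2 : i < n) (m : MaxChain n P) : U i (U i m) = U i m := by
  have hwin : ∀ j, i - 1 < j → j < i - 1 + 2 → j = i := by omega
  refine hEL.maxChain_ext (a := i - 1) (k := 2) (by omega)
    (fun j hj => hU.apply_of_ne h1 h2 _ (by omega)) ?_ ?_ <;>
  · intro j hj hj'
    rw [hwin j hj hj']
    exact hU.not_descentAt h1 h2 _

theorem apply_comm_at {j : ℕ} (hi1 : 1 ≤ i) (hi2 : i < n) (hj1 : 1 ≤ j) (hj2 : j < n)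
    (hij : i + 2 ≤ j ∨ j + 2 ≤ i) (m : MaxChain n P) : (U i (U j m)).1 i = (U j (U i m)).1 i := by
  have hfar : ∀ k, i - 1 ≤ k → k ≤ i + 1 → (U j (U i m)).1 k = (U i m).1 k :=
    fun k hk hk' => hU.apply_of_ne hj1 hj2 _ (by omega)
  have hnear : ∀ k, i - 1 ≤ k → k ≤ i + 1 → k ≠ i → (U i (U j m)).1 k = (U j (U i m)).1 k := by
    intro k hk hk' hki
    rw [hfar k hk hk', hU.apply_of_ne hi1 hi2 _ hki, hU.apply_of_ne hi1 hi2 _ hki,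
      hU.apply_of_ne hj1 hj2 _ (by omega)]
  refine hEL.eq_of_forall_not_descentAt (U i (U j m)).2 (U j (U i m)).2 (k := 2) (by omega)
    (hnear _ le_rfl (by omega) (by omega)) (hnear _ (by omega) (by omega) (by omega))
    (fun k hk hk' => ?_) (fun k hk hk' => ?_) (by omega) (by omega) <;>
  rw [show k = i by omega]
  · exact hU.not_descentAt hi1 hi2 _
  · rw [descentAt_congr (hfar _ le_rfl (by omega)) (hfar _ (by omega) (by omega))
      (hfar _ (by omega) le_rfl)]
    exact hU.not_descentAt hi1 hi2 m

theorem apply_comm {j : ℕ} (hi1 : 1 ≤ i) (hi2 : i < n) (hj1 : 1 ≤ j) (hj2 : j < n)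
    (hij : i + 2 ≤ j) (m : MaxChain n P) : U i (U j m) = U j (U i m) := by
  refine Subtype.ext (funext fun k => ?_)
  by_cases hki : k = i
  · exact hki ▸ hU.apply_comm_at hEL hi1 hi2 hj1 hj2 (.inl hij) m
  by_cases hkj : k = j
  · exact hkj ▸ (hU.apply_comm_at hEL hj1 hj2 hi1 hi2 (.inr hij) m).symm
  rw [hU.apply_of_ne hi1 hi2 _ hki, hU.apply_of_ne hj1 hj2 _ hkj, hU.apply_of_ne hj1 hj2 _ hkj,
    hU.apply_of_ne hi1 hi2 _ hki]

theorem apply_braid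
    (hword : ∀ c : ℕ → P, IsSatChain n c ⊥ ⊤ → ∃ σ : Equiv.Perm (Fin n), HasWord lab c σ)
    (h1 : 1 ≤ i) (h2 : i + 1 < n) (m : MaxChain n P) :
    U i (U (i + 1) (U i m)) = U (i + 1) (U i (U (i + 1) m)) := by
  have hi : i < n := by omega
  have hi' : 1 ≤ i + 1 := by omega
  have sort_fst (c : MaxChain n P) :
      edgeLab lab (U i c).1 (i - 1) = min (edgeLab lab c.1 (i - 1)) (edgeLab lab c.1 i) ∧
      edgeLab lab (U i c).1 i = max (edgeLab lab c.1 (i - 1)) (edgeLab lab c.1 i) ∧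
      edgeLab lab (U i c).1 (i + 1) = edgeLab lab c.1 (i + 1) :=
    ⟨(hU.edgeLab_sort h1 hi hword c).1, (hU.edgeLab_sort h1 hi hword c).2,
      hU.edgeLab_of_ne h1 hi c (by omega) (by omega)⟩
  have sort_snd (c : MaxChain n P) :
      edgeLab lab (U (i + 1) c).1 (i - 1) = edgeLab lab c.1 (i - 1) ∧
      edgeLab lab (U (i + 1) c).1 i = min (edgeLab lab c.1 i) (edgeLab lab c.1 (i + 1)) ∧
      edgeLab lab (U (i + 1) c).1 (i + 1) = max (edgeLab lab c.1 i) (edgeLab lab c.1 (i + 1)) :=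
    ⟨hU.edgeLab_of_ne hi' h2 c (by omega) (by omega), hU.edgeLab_sort hi' h2 hword c⟩
  have sorted (c : MaxChain n P) (hlo : edgeLab lab c.1 (i - 1) ≤ edgeLab lab c.1 i)
      (hhi : edgeLab lab c.1 i ≤ edgeLab lab c.1 (i + 1)) :
      ∀ j, i - 1 < j → j < i - 1 + 3 → ¬ DescentAt lab c.1 j := by
    intro j hj hj'
    obtain rfl | rfl : j = i ∨ j = i + 1 := by omega
    · exact (descentAt_iff h1).not.mpr (not_lt.mpr hlo)
    · exact (descentAt_iff hi').not.mpr (not_lt.mpr (by simpa using hhi))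
  obtain ⟨a1, b1, c1⟩ := sort_fst m
  obtain ⟨a2, b2, c2⟩ := sort_snd (U i m)
  obtain ⟨a3, b3, c3⟩ := sort_fst (U (i + 1) (U i m))
  obtain ⟨a1', b1', c1'⟩ := sort_snd m
  obtain ⟨a2', b2', c2'⟩ := sort_fst (U (i + 1) m)
  obtain ⟨a3', b3', c3'⟩ := sort_snd (U i (U (i + 1) m))
  refine hEL.maxChain_ext (a := i - 1) (k := 3) (by omega) (fun j hj => ?_)
    (sorted _ (by omega) (by omega)) (sorted _ (by omega) (by omega))
  have hji : j ≠ i := by omega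
  have hji' : j ≠ i + 1 := by omega
  rw [hU.apply_of_ne h1 hi _ hji, hU.apply_of_ne hi' h2 _ hji', hU.apply_of_ne h1 hi _ hji,
    hU.apply_of_ne hi' h2 _ hji', hU.apply_of_ne h1 hi _ hji, hU.apply_of_ne hi' h2 _ hji']

end IsUSystem

end USystem

theorem hecke_representation_general {P : Type*} [PartialOrder P] [BoundedOrder P]
    {n : ℕ} (lab : P → P → ℤ) (hsn : IsSnELLabeling n lab)
    (U : ℕ → MaxChain n P → MaxChain n P) (hU : IsUSystem n lab U)
    (T : ℕ → Module.End ℂ (MaxChain n P →₀ ℂ))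
    (hT : ∀ i, T i = -(Finsupp.lmapDomain ℂ ℂ (U i))) :
    (∀ i, 1 ≤ i → i < n → T i * T i = -(T i)) ∧
    (∀ i j, 1 ≤ i → i < n → 1 ≤ j → j < n → i + 2 ≤ j → T i * T j = T j * T i) ∧
    (∀ i, 1 ≤ i → i + 1 < n →
      T i * T (i + 1) * T i = T (i + 1) * T i * T (i + 1)) := by
  have hmul (i j : ℕ) : T i * T j = Finsupp.lmapDomain ℂ ℂ (U i ∘ U j) := by
    rw [hT, hT, Module.End.mul_eq_comp, LinearMap.neg_comp, LinearMap.comp_neg, neg_neg,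
      Finsupp.lmapDomain_comp]
  have hmul₃ (i j k : ℕ) : T i * T j * T k = -Finsupp.lmapDomain ℂ ℂ (U i ∘ U j ∘ U k) := by
    rw [hmul, hT k, Module.End.mul_eq_comp, LinearMap.comp_neg, ← Finsupp.lmapDomain_comp]
    rfl
  refine ⟨fun i h1 h2 => ?_, fun i j hi1 hi2 hj1 hj2 hij => ?_, fun i h1 h2 => ?_⟩
  · rw [hmul, hT]
    exact (congrArg _ (funext (hU.apply_apply_self hsn.1 h1 h2))).trans
      (neg_neg (Finsupp.lmapDomain ℂ ℂ (U i))).symm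
  · rw [hmul, hmul]
    exact congrArg _ (funext (hU.apply_comm hsn.1 hi1 hi2 hj1 hj2 hij))
  · rw [hmul₃, hmul₃]
    exact congrArg _ (congrArg _ (funext (hU.apply_braid hsn.1 hsn.2 h1 h2)))

/-- The linear operators `T_i = -U_i` on the free complex vector space
on the maximal chains of an `S_n` EL-labeled finite graded poset satisfy the defining
relations of the 0-Hecke algebra `H_n(0)` of type `A_{n-1}`, hence give a representation
of `H_n(0)`. -/
theorem hecke_representation {P : Type*} [PartialOrder P] [BoundedOrder P] [Fintype P]
    {n : ℕ} (rk : P → ℕ) (hg : IsGraded n rk)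
    (lab : P → P → ℤ) (hsn : IsSnELLabeling n lab)
    (U : ℕ → MaxChain n P → MaxChain n P) (hU : IsUSystem n lab U)
    (T : ℕ → Module.End ℂ (MaxChain n P →₀ ℂ))
    (hT : ∀ i, T i = -(Finsupp.lmapDomain ℂ ℂ (U i))) :
    (∀ i, 1 ≤ i → i < n → T i * T i = -(T i)) ∧
    (∀ i j, 1 ≤ i → i < n → 1 ≤ j → j < n → i + 2 ≤ j → T i * T j = T j * T i) ∧
    (∀ i, 1 ≤ i → i + 1 < n →
      T i * T (i + 1) * T i = T (i + 1) * T i * T (i + 1)) :=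
  hecke_representation_general lab hsn U hU T hT
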